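/- arXiv:2211.04956 — 3 statements merged into one kernel-verified Lean document; each statement's English description precedes it below -/
import Mathlib

section
/- Let k ≥ 2, d ≤ m, and N_1,…,N_m > k+1. Let F ⊆ ∏_{i=1}^m {1,…,N_i} have k-Natarajan dimension at most d. Then |F| ≤ k^{m-d} · ∑_{i=0}^d ∑_{S ⊆ [m], |S|=i} ∏_{j∈S} C(N_j, k+1), where C(n,r) is the binomial coefficient. -/
/-!
Induct on the set `A` of coordinates on which the members of `F` may differ. Overwriting a
coordinate `a ∈ A` by a fixed value maps `F` onto a class `G` of dimension at most `d`; over each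
`g ∈ G` lies the set `Y g` of values taken at `a`. Since `t ≤ k + C(t, k+1)`,
`|F| = ∑_g |Y g| ≤ k |G| + ∑_T |G_T|`, where `T` runs over the `(k+1)`-subsets of `[N_a]` and
`G_T = {g | T ⊆ Y g}`. A set shattered by `G_T` extends by `a` to a set shattered by `F`, so `G_T`
has dimension at most `d - 1`, and the Pascal-type recursion of the bound closes the induction.
Once `|A| ≤ d`, the trivial bound `∏ N_i ≤ ∏ (1 + C(N_i, k+1))` takes over.
-/

/-- `F ⊆ ∏ᵢ [Nᵢ]` `k`-Natarajan shatters the set `S` of coordinates. -/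
def kNatShatters {m : ℕ} {N : Fin m → ℕ} (k : ℕ) (F : Finset (∀ i, Fin (N i)))
    (S : Finset (Fin m)) : Prop :=
  ∃ y : ∀ i, Finset (Fin (N i)),
    (∀ i ∈ S, (y i).card = k + 1) ∧
    ∀ g : ∀ i, Fin (N i), (∀ i ∈ S, g i ∈ y i) → ∃ f ∈ F, ∀ i ∈ S, f i = g i

open Finset

theorem Nat.le_add_choose_succ (k t : ℕ) : t ≤ k + t.choose (k + 1) := by
  induction t with
  | zero => exact Nat.zero_le _
  | succ t ih =>
    rcases Nat.lt_or_ge t k with h | h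
    · omega
    · have := Nat.choose_pos h
      rw [Nat.choose_succ_succ']
      omega

theorem Nat.le_choose_succ_of_lt {k n : ℕ} (h : k + 1 < n) : n ≤ n.choose (k + 1) := by
  induction n, h using Nat.le_induction with
  | base => rw [Nat.choose_succ_self_right]
  | succ n hn ih =>
    have := Nat.choose_pos (show k ≤ n by omega)
    rw [Nat.choose_succ_succ']
    omega

theorem Finset.sum_powersetCard_insert_succ {ι R : Type*} [DecidableEq ι] [CommSemiring R]
    (w : ι → R) {a : ι} {A : Finset ι} (ha : a ∉ A) (i : ℕ) :
    ∑ S ∈ powersetCard (i + 1) (insert a A), ∏ j ∈ S, w j =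
      ∑ S ∈ powersetCard (i + 1) A, ∏ j ∈ S, w j +
        w a * ∑ S ∈ powersetCard i A, ∏ j ∈ S, w j := by
  have hnot : ∀ S ∈ powersetCard i A, a ∉ S := fun S hS h => ha ((mem_powersetCard.1 hS).1 h)
  rw [powersetCard_succ_insert ha, sum_union, sum_image, mul_sum]
  · exact congrArg _ (sum_congr rfl fun S hS => prod_insert (hnot S hS))
  · exact fun S hS T hT hST => by
      rw [← erase_insert (hnot S hS), hST, erase_insert (hnot T hT)]
  · exact disjoint_left.2 fun S hS hS' => by
      obtain ⟨T, -, rfl⟩ := mem_image.1 hS'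
      exact ha ((mem_powersetCard.1 hS).1 (mem_insert_self a T))

theorem Finset.sum_choose_card_eq_sum_card_filter_subset {β γ : Type*} [Fintype γ]
    [DecidableEq γ] (s : Finset β) (Y : β → Finset γ) (r : ℕ) :
    ∑ b ∈ s, (#(Y b)).choose r = ∑ T ∈ powersetCard r univ, #{b ∈ s | T ⊆ Y b} := by
  have h : ∀ b, (#(Y b)).choose r = #{T ∈ powersetCard r univ | T ⊆ Y b} := fun b => by
    rw [← card_powersetCard]
    congr 1
    ext T
    simp [mem_powersetCard, and_comm]
  simp_rw [h]
  exact sum_card_bipartiteAbove_eq_sum_card_bipartiteBelow (fun b T => T ⊆ Y b)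

section SauerBound

variable {ι : Type*} (k : ℕ) (w : ι → ℕ)

def sauerBound (A : Finset ι) (d : ℕ) : ℕ :=
  k ^ (#A - d) * ∑ i ∈ range (d + 1), ∑ S ∈ powersetCard i A, ∏ j ∈ S, w j

theorem sauerBound_of_card_le {A : Finset ι} {d : ℕ} (hA : #A ≤ d) :
    sauerBound k w A d = ∏ j ∈ A, (w j + 1) := by
  rw [sauerBound, Nat.sub_eq_zero_of_le hA, pow_zero, one_mul, prod_add_one, sum_powerset]
  refine (sum_subset (range_subset_range.2 (by omega)) fun i _ hi => ?_).symm
  rw [powersetCard_eq_empty.2 (by simp at hi; omega), sum_empty]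

theorem sauerBound_insert_zero [DecidableEq ι] {a : ι} {A : Finset ι} (ha : a ∉ A) :
    sauerBound k w (insert a A) 0 = k * sauerBound k w A 0 := by
  simp [sauerBound, card_insert_of_notMem ha, pow_succ']

theorem sauerBound_insert_succ [DecidableEq ι] {a : ι} {A : Finset ι} (ha : a ∉ A) {d : ℕ}
    (hd : d + 1 ≤ #A) :
    sauerBound k w (insert a A) (d + 1) =
      k * sauerBound k w A (d + 1) + w a * sauerBound k w A d := by
  have hpow : k * k ^ (#A - (d + 1)) = k ^ (#A - d) := by
    rw [← pow_succ']; congr 1; omega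
  simp only [sauerBound, card_insert_of_notMem ha, Nat.add_sub_add_right]
  rw [sum_range_succ', sum_range_succ' _ (d + 1)]
  simp only [sum_powersetCard_insert_succ w ha, sum_add_distrib, ← mul_sum, powersetCard_zero]
  rw [← mul_assoc, hpow]
  ring

end SauerBound

section Shattering

variable {m : ℕ} {N : Fin m → ℕ}

def AgreeOutside (F : Finset (∀ i, Fin (N i))) (A : Finset (Fin m)) : Prop :=
  ∀ f ∈ F, ∀ f' ∈ F, ∀ i ∉ A, f i = f' i

theorem AgreeOutside.mono {F G : Finset (∀ i, Fin (N i))} {A : Finset (Fin m)}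
    (hF : AgreeOutside F A) (hGF : G ⊆ F) : AgreeOutside G A :=
  fun g hg g' hg' => hF g (hGF hg) g' (hGF hg')

theorem AgreeOutside.card_le_prod {F : Finset (∀ i, Fin (N i))} {A : Finset (Fin m)}
    (hF : AgreeOutside F A) : #F ≤ ∏ i ∈ A, N i := by
  obtain rfl | ⟨f₀, hf₀⟩ := F.eq_empty_or_nonempty
  · exact Nat.zero_le _
  have hsub : F ⊆ Fintype.piFinset fun i => if i ∈ A then univ else {f₀ i} := fun f hf => by
    refine Fintype.mem_piFinset.2 fun i => ?_
    split_ifs with hi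
    · exact mem_univ _
    · exact mem_singleton.2 (hF f hf f₀ hf₀ i hi)
  refine (card_le_card hsub).trans_eq ?_
  rw [Fintype.card_piFinset]
  simp [apply_ite, prod_ite_mem]

theorem kNatShatters_empty (k : ℕ) {F : Finset (∀ i, Fin (N i))} (hF : F.Nonempty) :
    kNatShatters k F ∅ :=
  ⟨fun _ => ∅, by simp, fun _ _ => ⟨hF.choose, hF.choose_spec, by simp⟩⟩

theorem kNatShatters.of_forall_exists {k : ℕ} {F G : Finset (∀ i, Fin (N i))}
    {S : Finset (Fin m)} (h : ∀ g ∈ G, ∃ f ∈ F, ∀ i ∈ S, f i = g i)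
    (hG : kNatShatters k G S) : kNatShatters k F S := by
  obtain ⟨y, hy, hsh⟩ := hG
  refine ⟨y, hy, fun x hx => ?_⟩
  obtain ⟨g, hg, hgx⟩ := hsh x hx
  obtain ⟨f, hf, hfg⟩ := h g hg
  exact ⟨f, hf, fun i hi => (hfg i hi).trans (hgx i hi)⟩

theorem kNatShatters.notMem_of_forall_apply_eq {k : ℕ} (hk : 1 ≤ k) (hN : ∀ i, 0 < N i)
    {H : Finset (∀ i, Fin (N i))} {a : Fin m} {z : Fin (N a)} (hH : ∀ h ∈ H, h a = z)
    {S : Finset (Fin m)} (hS : kNatShatters k H S) : a ∉ S := by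
  intro haS
  obtain ⟨y, hy, hsh⟩ := hS
  obtain ⟨b, hb, c, hc, hbc⟩ := one_lt_card.1 (show 1 < #(y a) by rw [hy a haS]; omega)
  have hsel : ∀ i, ∃ v : Fin (N i), i ∈ S → v ∈ y i := fun i => by
    by_cases hi : i ∈ S
    · obtain ⟨v, hv⟩ := card_pos.1 (show 0 < #(y i) by rw [hy i hi]; omega)
      exact ⟨v, fun _ => hv⟩
    · exact ⟨⟨0, hN i⟩, fun h => absurd h hi⟩
  choose g hg using hsel
  have hz : ∀ v ∈ y a, v = z := fun v hv => by
    obtain ⟨f, hf, hfg⟩ := hsh (Function.update g a v) fun i hi => by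
      rcases eq_or_ne i a with rfl | hia
      · simpa using hv
      · simpa [Function.update_of_ne hia] using hg i hi
    simpa [← hH f hf] using (hfg a haS).symm
  exact hbc ((hz b hb).trans (hz c hc).symm)

section Collapse

variable (a : Fin m) (z : Fin (N a)) (F : Finset (∀ i, Fin (N i)))

/-- Forgets coordinate `a` without leaving `∏ᵢ [Nᵢ]`, by overwriting it with `z`. -/
def collapse : Finset (∀ i, Fin (N i)) :=
  F.image (Function.update · a z)

def fiberValues (g : ∀ i, Fin (N i)) : Finset (Fin (N a)) :=
  {f ∈ F | Function.update f a z = g}.image (· a)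

def collapseClass (T : Finset (Fin (N a))) : Finset (∀ i, Fin (N i)) :=
  {g ∈ collapse a z F | T ⊆ fiberValues a z F g}

theorem card_eq_sum_card_fiberValues :
    #F = ∑ g ∈ collapse a z F, #(fiberValues a z F g) := by
  rw [collapse, card_eq_sum_card_image (Function.update · a z) F]
  refine sum_congr rfl fun g _ => (card_image_of_injOn fun f hf f' hf' hff' => ?_).symm
  simp only [mem_coe, mem_filter] at hf hf'
  funext i
  rcases eq_or_ne i a with rfl | hia
  · exact hff'
  · simpa [Function.update_of_ne hia] using congrFun (hf.2.trans hf'.2.symm) i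

theorem card_le_mul_card_collapse_add_sum (k : ℕ) :
    #F ≤ k * #(collapse a z F) +
      ∑ T ∈ powersetCard (k + 1) univ, #(collapseClass a z F T) := by
  calc #F = ∑ g ∈ collapse a z F, #(fiberValues a z F g) := card_eq_sum_card_fiberValues a z F
    _ ≤ ∑ g ∈ collapse a z F, (k + (#(fiberValues a z F g)).choose (k + 1)) :=
      sum_le_sum fun g _ => Nat.le_add_choose_succ k _
    _ = k * #(collapse a z F) + ∑ T ∈ powersetCard (k + 1) univ, #(collapseClass a z F T) := by
      rw [sum_add_distrib, sum_const, smul_eq_mul, mul_comm,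
        sum_choose_card_eq_sum_card_filter_subset]
      rfl

variable {a z F}

theorem apply_eq_of_mem_collapse {g : ∀ i, Fin (N i)} (hg : g ∈ collapse a z F) : g a = z := by
  obtain ⟨f, -, rfl⟩ := mem_image.1 hg
  exact Function.update_self a z f

theorem AgreeOutside.collapse {A : Finset (Fin m)} (hF : AgreeOutside F (insert a A)) :
    AgreeOutside (collapse a z F) A := by
  intro g hg g' hg' i hi
  rcases eq_or_ne i a with rfl | hia
  · rw [apply_eq_of_mem_collapse hg, apply_eq_of_mem_collapse hg']
  obtain ⟨f, hf, rfl⟩ := mem_image.1 hg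
  obtain ⟨f', hf', rfl⟩ := mem_image.1 hg'
  simpa [Function.update_of_ne hia] using hF f hf f' hf' i (by simp [hia, hi])

theorem kNatShatters.of_collapse {k : ℕ} (hk : 1 ≤ k) (hN : ∀ i, 0 < N i) {S : Finset (Fin m)}
    (hS : kNatShatters k (collapse a z F) S) : kNatShatters k F S := by
  have haS := hS.notMem_of_forall_apply_eq hk hN fun _ => apply_eq_of_mem_collapse
  refine hS.of_forall_exists fun g hg => ?_
  obtain ⟨f, hf, rfl⟩ := mem_image.1 hg
  exact ⟨f, hf, fun i hi => by rw [Function.update_of_ne (ne_of_mem_of_not_mem hi haS)]⟩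

theorem kNatShatters.insert_of_collapseClass {k : ℕ} {T : Finset (Fin (N a))} (hT : #T = k + 1)
    {S : Finset (Fin m)} (haS : a ∉ S) (hS : kNatShatters k (collapseClass a z F T) S) :
    kNatShatters k F (insert a S) := by
  obtain ⟨y, hy, hsh⟩ := hS
  have hne : ∀ i ∈ S, i ≠ a := fun i hi => ne_of_mem_of_not_mem hi haS
  refine ⟨Function.update y a T, fun i hi => ?_, fun x hx => ?_⟩
  · rcases mem_insert.1 hi with rfl | hi
    · simpa using hT
    · simpa [Function.update_of_ne (hne i hi)] using hy i hi
  obtain ⟨g, hg, hgx⟩ := hsh x fun i hi => by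
    simpa [Function.update_of_ne (hne i hi)] using hx i (mem_insert_of_mem hi)
  have hxa : x a ∈ fiberValues a z F g :=
    (mem_filter.1 hg).2 (by simpa using hx a (mem_insert_self a S))
  obtain ⟨f, hf, hfa⟩ := mem_image.1 hxa
  refine ⟨f, (mem_filter.1 hf).1, fun i hi => ?_⟩
  rcases mem_insert.1 hi with rfl | hi
  · exact hfa
  · rw [← hgx i hi, ← (mem_filter.1 hf).2, Function.update_of_ne (hne i hi)]

end Collapse

theorem card_le_sauerBound_of_card_le {k : ℕ} (hN : ∀ i, k + 1 < N i) {A : Finset (Fin m)}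
    {d : ℕ} {F : Finset (∀ i, Fin (N i))} (hF : AgreeOutside F A) (hA : #A ≤ d) :
    #F ≤ sauerBound k (fun j => (N j).choose (k + 1)) A d := by
  rw [sauerBound_of_card_le _ _ hA]
  exact hF.card_le_prod.trans
    (prod_le_prod' fun i _ => (Nat.le_choose_succ_of_lt (hN i)).trans (Nat.le_succ _))

theorem card_le_sauerBound {k : ℕ} (hk : 1 ≤ k) (hN : ∀ i, k + 1 < N i) {A : Finset (Fin m)}
    {d : ℕ} {F : Finset (∀ i, Fin (N i))} (hF : AgreeOutside F A)
    (hdim : ∀ S, kNatShatters k F S → #S ≤ d) :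
    #F ≤ sauerBound k (fun j => (N j).choose (k + 1)) A d := by
  induction A using Finset.induction_on generalizing d F with
  | empty => exact card_le_sauerBound_of_card_le hN hF (by simp)
  | insert a A ha ih =>
    -- below this threshold the exponent `#A - d` of `sauerBound` truncates to `0`
    -- and the recursion `sauerBound_insert_succ` is not available
    by_cases hd : #(insert a A) ≤ d
    · exact card_le_sauerBound_of_card_le hN hF hd
    have hN₀ : ∀ i, 0 < N i := fun i => by have := hN i; omega
    set z : Fin (N a) := ⟨0, hN₀ a⟩
    have hG : #(collapse a z F) ≤ sauerBound k _ A d :=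
      ih hF.collapse fun S hS => hdim S (hS.of_collapse hk hN₀)
    have hclass : ∀ T ∈ powersetCard (k + 1) univ, ∀ S,
        kNatShatters k (collapseClass a z F T) S → #S + 1 ≤ d := fun T hT S hS => by
      have haS := hS.notMem_of_forall_apply_eq hk hN₀ fun g hg =>
        apply_eq_of_mem_collapse (mem_filter.1 hg).1
      rw [← card_insert_of_notMem haS]
      exact hdim _ (hS.insert_of_collapseClass (mem_powersetCard.1 hT).2 haS)
    refine (card_le_mul_card_collapse_add_sum a z F k).trans ?_
    cases d with
    | zero =>
      have hempty : ∀ T ∈ powersetCard (k + 1) univ, collapseClass a z F T = ∅ := fun T hT =>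
        not_nonempty_iff_eq_empty.1 fun hne => by
          simpa using hclass T hT ∅ (kNatShatters_empty k hne)
      rw [sum_eq_zero fun T hT => by rw [hempty T hT, card_empty], add_zero,
        sauerBound_insert_zero _ _ ha]
      exact Nat.mul_le_mul_left k hG
    | succ e =>
      have hT : ∀ T ∈ powersetCard (k + 1) univ,
          #(collapseClass a z F T) ≤ sauerBound k _ A e :=
        fun T hT => ih (hF.collapse.mono (filter_subset _ _)) fun S hS => by
          have := hclass T hT S hS
          omega
      rw [card_insert_of_notMem ha] at hd
      rw [sauerBound_insert_succ _ _ ha (by omega)]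
      refine add_le_add (Nat.mul_le_mul_left k hG) ((sum_le_sum hT).trans_eq ?_)
      rw [sum_const, card_powersetCard, card_univ, Fintype.card_fin, smul_eq_mul]

end Shattering

theorem stmt1_general {m d k : ℕ} (hk : 2 ≤ k) (N : Fin m → ℕ)
    (hN : ∀ i, k + 1 < N i) (F : Finset (∀ i, Fin (N i)))
    (hdim : ∀ S : Finset (Fin m), kNatShatters k F S → S.card ≤ d) :
    F.card ≤ k ^ (m - d) *
      ∑ i ∈ Finset.range (d + 1),
        ∑ S ∈ Finset.powersetCard i (Finset.univ : Finset (Fin m)),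
          ∏ j ∈ S, (N j).choose (k + 1) := by
  simpa [sauerBound] using
    card_le_sauerBound (by omega) hN (A := univ) (fun _ _ _ _ i hi => absurd (mem_univ i) hi) hdim

/-- Sauer's lemma for lists: if `k ≥ 2`, `d ≤ m`, each `Nᵢ > k+1` and the
`k`-Natarajan dimension of `F ⊆ ∏ᵢ [Nᵢ]` is at most `d`, then
`|F| ≤ k^(m-d) ∑_{i=0}^d ∑_{|S|=i} ∏_{j∈S} C(Nⱼ, k+1)`. -/
theorem stmt1 {m d k : ℕ} (hk : 2 ≤ k) (hdm : d ≤ m) (N : Fin m → ℕ)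
    (hN : ∀ i, k + 1 < N i) (F : Finset (∀ i, Fin (N i)))
    (hdim : ∀ S : Finset (Fin m), kNatShatters k F S → S.card ≤ d) :
    F.card ≤ k ^ (m - d) *
      ∑ i ∈ Finset.range (d + 1),
        ∑ S ∈ Finset.powersetCard i (Finset.univ : Finset (Fin m)),
          ∏ j ∈ S, (N j).choose (k + 1) :=
  stmt1_general hk N hN F hdim
end

section
/- Let H ⊆ Y^{d+1} be a finite hypothesis class with k-DS dimension at most d. Then there exists a k-list orientation σ of the one-inclusion graph G(H) whose maximum k-outdegree is at most d; that is, for every vertex h ∈ H, the number of edges e containing h with σ(e) not containing h is at most d. -/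
variable {Y : Type*} [DecidableEq Y]

/-- The edge of the one-inclusion graph of `H ⊆ Y^m` in direction `i` through
the vertex `v`: all members of `H` agreeing with `v` off coordinate `i`. -/
def edge {m : ℕ} (H : Finset (Fin m → Y)) (i : Fin m) (v : Fin m → Y) :
    Finset (Fin m → Y) :=
  H.filter fun g => ∀ j, j ≠ i → g j = v j

/-- `H ⊆ Y^m` `k`-DS shatters the sequence of coordinates `S ∈ [m]^n`. -/
def kDSShattersF {m : ℕ} (k : ℕ) (H : Finset (Fin m → Y)) {n : ℕ}
    (S : Fin n → Fin m) : Prop :=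
  ∃ F : Finset (Fin m → Y), F ⊆ H ∧ F.Nonempty ∧
    ∀ f ∈ F, ∀ i : Fin n,
      k ≤ ((F.image fun h => fun j => h (S j)).filter
        (fun g => g i ≠ f (S i) ∧ ∀ j, j ≠ i → g j = f (S j))).card

lemma edge_eq_of_mem {m : ℕ} (F : Finset (Fin m → Y)) (i : Fin m)
    {v g : Fin m → Y} (hg : g ∈ edge F i v) : edge F i g = edge F i v := by
  simp only [edge, Finset.mem_filter] at hg ⊢
  apply Finset.filter_congr
  intro x _
  constructor <;> intro h j hj
  · rw [h j hj, hg.2 j hj]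
  · rw [h j hj, hg.2 j hj]

lemma peel {d k : ℕ} {H : Finset (Fin (d+1) → Y)}
    (key : ∀ F ⊆ H, F.Nonempty → ∃ f ∈ F, ∃ i : Fin (d+1),
      (F.filter (fun g => g i ≠ f i ∧ ∀ j, j ≠ i → g j = f j)).card < k) :
    ∀ F : Finset (Fin (d+1) → Y), F ⊆ H →
      ∃ dir : (Fin (d+1) → Y) → Fin (d+1),
        ∀ v ∈ F, ∀ i, ((edge F i v).filter (fun f => dir f = i)).card ≤ k := by
  intro F
  induction F using Finset.strongInduction with
  | _ F ih =>
    intro hFH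
    rcases F.eq_empty_or_nonempty with rfl | hne
    · exact ⟨fun _ => 0, by simp [edge]⟩
    obtain ⟨f, hf, i, hfi⟩ := key F hFH hne
    obtain ⟨dir', hdir'⟩ := ih (F.erase f) (Finset.erase_ssubset hf)
      ((Finset.erase_subset _ _).trans hFH)
    refine ⟨Function.update dir' f i, ?_⟩
    intro v hv j
    set A := (edge F j v).filter (fun g => Function.update dir' f i g = j) with hA
    by_cases hfA : f ∈ A
    · -- then j = i, and A ⊆ edge F i f which has card ≤ k
      have hmem : f ∈ edge F j v ∧ Function.update dir' f i f = j := by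
        simpa [hA] using hfA
      have hij : i = j := by simpa using hmem.2
      subst hij
      have hAe : A ⊆ edge F i f := by
        rw [hA, ← edge_eq_of_mem F i hmem.1]
        exact (Finset.filter_subset _ _)
      have hsub : edge F i f ⊆
          insert f (F.filter (fun g => g i ≠ f i ∧ ∀ j, j ≠ i → g j = f j)) := by
        intro g hg
        simp only [edge, Finset.mem_filter] at hg
        by_cases hgi : g i = f i
        · have : g = f := by
            funext j
            by_cases hji : j = i
            · rw [hji, hgi]
            · exact hg.2 j hji
          rw [this]
          exact Finset.mem_insert_self _ _
        · exact Finset.mem_insert_of_mem (Finset.mem_filter.2 ⟨hg.1, hgi, hg.2⟩)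
      have h1 : A.card ≤ (insert f (F.filter (fun g => g i ≠ f i ∧ ∀ j, j ≠ i → g j = f j))).card :=
        Finset.card_le_card (hAe.trans hsub)
      have h2 := Finset.card_insert_le f (F.filter (fun g => g i ≠ f i ∧ ∀ j, j ≠ i → g j = f j))
      exact h1.trans (h2.trans hfi)
    · -- f ∉ A
      rcases A.eq_empty_or_nonempty with hAe | ⟨g, hg⟩
      · simp [hAe]
      have hgm : g ∈ edge F j v ∧ Function.update dir' f i g = j := by
        simpa [hA] using hg
      have hgf : g ≠ f := by
        rintro rfl; exact hfA hg
      have hgF' : g ∈ F.erase f := by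
        refine Finset.mem_erase.2 ⟨hgf, ?_⟩
        have := hgm.1
        simp only [edge, Finset.mem_filter] at this
        exact this.1
      have hAsub : A ⊆ (edge (F.erase f) j g).filter (fun x => dir' x = j) := by
        intro x hx
        have hxm : x ∈ edge F j v ∧ Function.update dir' f i x = j := by
          simpa [hA] using hx
        have hxf : x ≠ f := by rintro rfl; exact hfA hx
        have hxg : x ∈ edge F j g := by
          rw [edge_eq_of_mem F j hgm.1]
          exact hxm.1
        simp only [edge, Finset.mem_filter] at hxg ⊢
        refine ⟨⟨Finset.mem_erase.2 ⟨hxf, hxg.1⟩, hxg.2⟩, ?_⟩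
        have := hxm.2
        rwa [Function.update_of_ne hxf] at this
      calc A.card ≤ _ := Finset.card_le_card hAsub
        _ ≤ k := hdir' g hgF' j

/-- If the finite class `H ⊆ Y^{d+1}` has `k`-DS dimension at most `d`, then the
one-inclusion graph of `H` has a `k`-list orientation `σ` (each edge is mapped to
a sublist of at most `k` of its vertices, consistently on equal edges) with
maximum `k`-outdegree at most `d`. -/
theorem stmt4 {d k : ℕ} (H : Finset (Fin (d + 1) → Y))
    (hdim : ∀ n : ℕ, d < n → ∀ S : Fin n → Fin (d + 1), ¬ kDSShattersF k H S) :
    ∃ σ : Fin (d + 1) → (Fin (d + 1) → Y) → Finset (Fin (d + 1) → Y),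
      (∀ i v, v ∈ H → σ i v ⊆ edge H i v ∧ (σ i v).card ≤ k) ∧
      (∀ i v w, v ∈ H → w ∈ H → edge H i v = edge H i w → σ i v = σ i w) ∧
      ∀ v ∈ H, (Finset.univ.filter fun i : Fin (d + 1) => v ∉ σ i v).card ≤ d := by
  have key : ∀ F ⊆ H, F.Nonempty → ∃ f ∈ F, ∃ i : Fin (d+1),
      (F.filter (fun g => g i ≠ f i ∧ ∀ j, j ≠ i → g j = f j)).card < k := by
    intro F hFH hne
    have h := hdim (d+1) (by omega) (fun j => j)
    rw [kDSShattersF] at h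
    push_neg at h
    obtain ⟨f, hf, i, hi⟩ := h F hFH hne
    refine ⟨f, hf, i, ?_⟩
    have himg : (F.image fun h => fun j => h j) = F := by
      simp
    rw [himg] at hi
    exact hi
  obtain ⟨dir, hdir⟩ := peel key H (le_refl H)
  refine ⟨fun i v => (edge H i v).filter (fun f => dir f = i), ?_, ?_, ?_⟩
  · exact fun i v hv => ⟨Finset.filter_subset _ _, hdir v hv i⟩
  · intro i v w _ _ he
    dsimp only
    rw [he]
  · intro v hv
    have hmem : v ∈ (edge H (dir v) v).filter (fun f => dir f = dir v) :=
      Finset.mem_filter.2 ⟨Finset.mem_filter.2 ⟨hv, fun j _ => rfl⟩, rfl⟩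
    have hsub : (Finset.univ.filter fun i : Fin (d + 1) =>
        v ∉ (edge H i v).filter (fun f => dir f = i)) ⊆ Finset.univ.erase (dir v) := by
      intro i hi
      refine Finset.mem_erase.2 ⟨?_, Finset.mem_univ _⟩
      rintro rfl
      exact (Finset.mem_filter.1 hi).2 hmem
    calc _ ≤ (Finset.univ.erase (dir v)).card := Finset.card_le_card hsub
      _ = d := by simp [Finset.card_erase_of_mem]
end

section
/- Let H ⊆ Y^{d+1} be a possibly infinite class, and suppose that for every finite subclass F ⊆ H with k-DS dimension at most d, the one-inclusion graph of F admits a k-list orientation with maximum k-outdegree at most d. Then, if H has k-DS dimension at most d, the class H itself admits a k-list orientation of its one-inclusion graph with maximum k-outdegree at most d. -/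
variable {Y : Type*} [DecidableEq Y]

/-- The edge of the one-inclusion graph of the (possibly infinite) class
`A ⊆ Y^m` in direction `i` through `v`. -/
def edgeS {m : ℕ} (A : Set (Fin m → Y)) (i : Fin m) (v : Fin m → Y) :
    Set (Fin m → Y) :=
  {h ∈ A | ∀ j, j ≠ i → h j = v j}

/-- `σ` is a `k`-list orientation of the one-inclusion graph of `A` with maximum
`k`-outdegree at most `D`: each edge is oriented to at most `k` of its own
vertices (consistently on equal edges), and every vertex `v ∈ A` has at most `D`
adjacent edges not oriented towards it. -/
def IsListOrientation {m : ℕ} (k D : ℕ) (A : Set (Fin m → Y))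
    (σ : Fin m → (Fin m → Y) → Set (Fin m → Y)) : Prop :=
  (∀ i v, v ∈ A → σ i v ⊆ edgeS A i v ∧ (σ i v).Finite ∧ (σ i v).ncard ≤ k) ∧
  (∀ i v w, v ∈ A → w ∈ A → edgeS A i v = edgeS A i w → σ i v = σ i w) ∧
  ∀ v ∈ A, {i : Fin m | v ∉ σ i v}.ncard ≤ D

/-- `H ⊆ Y^X` (here `X = Fin (d+1)`) `k`-DS shatters the coordinate sequence `S`. -/
def kDSShattersSeq {m : ℕ} (k : ℕ) (H : Set (Fin m → Y)) {n : ℕ}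
    (S : Fin n → Fin m) : Prop :=
  ∃ F : Finset (Fin m → Y), ↑F ⊆ H ∧ F.Nonempty ∧
    ∀ f ∈ F, ∀ i : Fin n,
      k ≤ ((F.image fun h => fun j => h (S j)).filter
        (fun g => g i ≠ f (S i) ∧ ∀ j, j ≠ i → g j = f (S j))).card

omit [DecidableEq Y] in
/-- Restriction of equal edges stays equal. -/
lemma edge_restrict {m : ℕ} (H F : Set (Fin m → Y)) (hFH : F ⊆ H) (i : Fin m)
    (v w : Fin m → Y) (hvw : edgeS H i v = edgeS H i w) :
    edgeS F i v = edgeS F i w := by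
  ext h
  constructor
  · rintro ⟨hF, hag⟩
    have hm : h ∈ edgeS H i v := ⟨hFH hF, hag⟩
    rw [hvw] at hm
    exact ⟨hF, hm.2⟩
  · rintro ⟨hF, hag⟩
    have hm : h ∈ edgeS H i w := ⟨hFH hF, hag⟩
    rw [← hvw] at hm
    exact ⟨hF, hm.2⟩

lemma finite_ncard_of_finsets {α : Type*} (S : Set α) (k : ℕ)
    (h : ∀ T : Finset α, ↑T ⊆ S → T.card ≤ k) : S.Finite ∧ S.ncard ≤ k := by
  have hfin : S.Finite := by
    by_contra hinf
    obtain ⟨T, hTS, hTc⟩ := Set.Infinite.exists_subset_card_eq hinf (k + 1)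
    have := h T hTS
    omega
  obtain ⟨T, hT⟩ := hfin.exists_finset_coe
  refine ⟨hfin, ?_⟩
  rw [← hT, Set.ncard_coe_finset]
  exact h T hT.subset

/-- Compactness step: if a possibly infinite class `H ⊆ Y^{d+1}` has `k`-DS
dimension at most `d`, and every finite subclass with `k`-DS dimension at most
`d` admits a `k`-list orientation of its one-inclusion graph with maximum
`k`-outdegree at most `d`, then so does `H` itself. -/
theorem stmt17 {d k : ℕ} (H : Set (Fin (d + 1) → Y))
    (hdim : ∀ n : ℕ, d < n → ∀ S : Fin n → Fin (d + 1), ¬ kDSShattersSeq k H S)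
    (hfin : ∀ F : Finset (Fin (d + 1) → Y), ↑F ⊆ H →
      (∀ n : ℕ, d < n → ∀ S : Fin n → Fin (d + 1),
        ¬ kDSShattersSeq k (↑F : Set (Fin (d + 1) → Y)) S) →
      ∃ σ, IsListOrientation k d (↑F : Set (Fin (d + 1) → Y)) σ) :
    ∃ σ, IsListOrientation k d H σ := by
  classical
  haveI hPne : Nonempty {F : Finset (Fin (d + 1) → Y) // ↑F ⊆ H} :=
    ⟨⟨∅, by simp⟩⟩
  set P := {F : Finset (Fin (d + 1) → Y) // ↑F ⊆ H} with hPdef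
  -- the filter of up-sets on finite subclasses
  let fb : P → Filter P := fun F => Filter.principal {G : P | F.1 ⊆ G.1}
  have hdirected : Directed (· ≥ ·) fb := by
    intro F G
    refine ⟨⟨F.1 ∪ G.1, by
      rw [Finset.coe_union]
      exact Set.union_subset F.2 G.2⟩, ?_, ?_⟩ <;>
    · refine Filter.principal_mono.2 ?_
      intro X hX
      simp only [Set.mem_setOf_eq, Finset.union_subset_iff] at hX ⊢
      try exact hX.1
      try exact hX.2
  have hb : ∀ F : P, (fb F).NeBot := fun F =>
    Filter.principal_neBot_iff.2 ⟨F, by simp [Set.mem_setOf_eq]⟩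
  haveI : (⨅ F : P, fb F).NeBot := Filter.iInf_neBot_of_directed hdirected hb
  let U : Ultrafilter P := Ultrafilter.of (⨅ F : P, fb F)
  have hup : ∀ F : P, {G : P | F.1 ⊆ G.1} ∈ U := by
    intro F
    exact Ultrafilter.of_le _ (Filter.mem_iInf_of_mem F (Filter.mem_principal_self _))
  -- choose orientations on finite subclasses
  have hdimF : ∀ G : P, ∀ n : ℕ, d < n → ∀ S : Fin n → Fin (d + 1),
      ¬ kDSShattersSeq k (↑G.1 : Set (Fin (d + 1) → Y)) S := by
    intro G n hn S hsh
    refine hdim n hn S ?_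
    obtain ⟨F', h1, h2, h3⟩ := hsh
    exact ⟨F', h1.trans G.2, h2, h3⟩
  let σG : ∀ _ : P, Fin (d + 1) → (Fin (d + 1) → Y) → Set (Fin (d + 1) → Y) :=
    fun G => (hfin G.1 G.2 (hdimF G)).choose
  have hσG : ∀ G : P, IsListOrientation k d (↑G.1) (σG G) :=
    fun G => (hfin G.1 G.2 (hdimF G)).choose_spec
  -- the limit orientation
  refine ⟨fun i v => {w | {G : P | w ∈ σG G i v} ∈ U}, ?_, ?_, ?_⟩
  · -- condition 1
    intro i v hv
    have hvset : {G : P | v ∈ G.1} ∈ U := by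
      refine Filter.mem_of_superset (hup ⟨{v}, by simpa using hv⟩) ?_
      intro G hG
      simpa using hG
    have hbound : ∀ T : Finset (Fin (d + 1) → Y),
        ↑T ⊆ {w | {G : P | w ∈ σG G i v} ∈ U} → T.card ≤ k := by
      intro T hT
      have hmem : (⋂ w ∈ (T : Set (Fin (d + 1) → Y)), {G : P | w ∈ σG G i v})
          ∩ {G : P | v ∈ G.1} ∈ U := by
        refine Filter.inter_mem ?_ hvset
        exact (Filter.biInter_mem T.finite_toSet).2 fun w hw => hT hw
      obtain ⟨G, hG1, hG2⟩ := Ultrafilter.nonempty_of_mem hmem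
      have hvG : v ∈ (↑G.1 : Set (Fin (d + 1) → Y)) := by simpa using hG2
      obtain ⟨_, hGfin, hGcard⟩ := (hσG G).1 i v hvG
      have hsub : (T : Set (Fin (d + 1) → Y)) ⊆ σG G i v := by
        intro w hw
        have := Set.mem_iInter₂.mp hG1 w hw
        exact this
      calc T.card = (T : Set (Fin (d + 1) → Y)).ncard := (Set.ncard_coe_finset T).symm
        _ ≤ (σG G i v).ncard := Set.ncard_le_ncard hsub hGfin
        _ ≤ k := hGcard
    obtain ⟨hSfin, hScard⟩ := finite_ncard_of_finsets _ k hbound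
    refine ⟨?_, hSfin, hScard⟩
    -- subset of the edge
    intro w hw
    have hmem : {G : P | w ∈ σG G i v} ∩ {G : P | v ∈ G.1} ∈ U := by
      refine Filter.inter_mem hw ?_
      refine Filter.mem_of_superset (hup ⟨{v}, by simpa using hv⟩) ?_
      intro G hG
      simpa using hG
    obtain ⟨G, hG1, hG2⟩ := Ultrafilter.nonempty_of_mem hmem
    have hvG : v ∈ (↑G.1 : Set (Fin (d + 1) → Y)) := by simpa using hG2
    have hwE : w ∈ edgeS (↑G.1) i v := ((hσG G).1 i v hvG).1 hG1
    exact ⟨G.2 hwE.1, hwE.2⟩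
  · -- condition 2
    intro i v w hv hw heq
    have hE : {G : P | v ∈ G.1 ∧ w ∈ G.1} ∈ U := by
      refine Filter.mem_of_superset (hup ⟨{v, w}, by
        rw [Finset.coe_insert, Finset.coe_singleton]
        exact Set.insert_subset hv (Set.singleton_subset_iff.2 hw)⟩) ?_
      intro G hG
      simp only [Set.mem_setOf_eq, Finset.insert_subset_iff, Finset.singleton_subset_iff] at hG
      exact hG
    have hagree : ∀ G : P, v ∈ G.1 ∧ w ∈ G.1 → σG G i v = σG G i w := by
      intro G ⟨h1, h2⟩
      exact (hσG G).2.1 i v w (by simpa using h1) (by simpa using h2)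
        (edge_restrict H (↑G.1) G.2 i v w heq)
    ext u
    simp only [Set.mem_setOf_eq]
    constructor
    · intro hu
      refine Filter.mem_of_superset (Filter.inter_mem hu hE) ?_
      rintro G ⟨hG1, hG2⟩
      simp only [Set.mem_setOf_eq] at hG1 ⊢
      rw [← hagree G hG2]
      exact hG1
    · intro hu
      refine Filter.mem_of_superset (Filter.inter_mem hu hE) ?_
      rintro G ⟨hG1, hG2⟩
      simp only [Set.mem_setOf_eq] at hG1 ⊢
      rw [hagree G hG2]
      exact hG1
  · -- condition 3
    intro v hv
    set bad := {i : Fin (d + 1) | v ∉ {w | {G : P | w ∈ σG G i v} ∈ U}} with hbad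
    have hbadfin : bad.Finite := Set.toFinite _
    have hcompl : ∀ i ∈ bad, {G : P | v ∉ σG G i v} ∈ U := by
      intro i hi
      have : {G : P | v ∈ σG G i v} ∉ U := hi
      have := (Ultrafilter.compl_mem_iff_notMem).2 this
      simpa [Set.compl_setOf] using this
    have hmem : (⋂ i ∈ bad, {G : P | v ∉ σG G i v}) ∩ {G : P | v ∈ G.1} ∈ U := by
      refine Filter.inter_mem ((Filter.biInter_mem hbadfin).2 hcompl) ?_
      refine Filter.mem_of_superset (hup ⟨{v}, by simpa using hv⟩) ?_
      intro G hG
      simpa using hG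
    obtain ⟨G, hG1, hG2⟩ := Ultrafilter.nonempty_of_mem hmem
    have hvG : v ∈ (↑G.1 : Set (Fin (d + 1) → Y)) := by simpa using hG2
    have hsub : bad ⊆ {i : Fin (d + 1) | v ∉ σG G i v} := by
      intro i hi
      exact Set.mem_iInter₂.mp hG1 i hi
    calc bad.ncard ≤ {i : Fin (d + 1) | v ∉ σG G i v}.ncard :=
          Set.ncard_le_ncard hsub (Set.toFinite _)
      _ ≤ d := (hσG G).2.2 v hvG
end
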